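/- Let M be a nonempty set, G, L : M → ℝ with L ≥ L₀ > 0 and G bounded, h : M → ℝ bounded with 0 ≤ h(ρ)/L(ρ) ≤ D for all ρ and some constant D. Define α₁ := inf over families {ν_q} (images of the temperature construction) of -G(ν_q)/L(ν_q), and suppose for each q ≥ 0 the Legendre relation -T(q) = inf_ρ (h(ρ) + q G(ρ))/(-L(ρ)) holds with -T(q) = -VD(ν_q) + q α(q) ≥ -D + q α₁. Then α₁ ≤ inf_{ρ ∈ M} (-G(ρ)/L(ρ)); combined with α₁ ≥ inf_{ρ} (-G(ρ)/L(ρ)) by definition, α₁ = inf_{ρ ∈ M} (-G(ρ)/L(ρ)). -/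

import Mathlib

open Filter Topology Set

/-! Evaluating the Legendre relation at a single `ρ` gives `-D + q α₁ ≤ -T q ≤ -h ρ / L ρ + q (-G ρ / L ρ)`,
hence `q α₁ ≤ D + q (-G ρ / L ρ)` for every `q ≥ 0`; dividing by `q` and letting `q → ∞` gives
`α₁ ≤ -G ρ / L ρ`. The reverse inequality holds because each `α q` is one of the values `-G ρ / L ρ`. -/

theorem le_of_forall_nonneg_mul_le_add {a b D : ℝ} (h : ∀ q : ℝ, 0 ≤ q → q * a ≤ D + q * b) :
    a ≤ b := by
  by_contra! hba
  have hpos : 0 < a - b := sub_pos.mpr hba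
  have hq := h ((|D| + 1) / (a - b)) (by positivity)
  have hcancel : (|D| + 1) / (a - b) * (a - b) = |D| + 1 := div_mul_cancel₀ _ hpos.ne'
  linarith [le_abs_self D]

theorem ciInf_comp_eq_of_forall_le {ι M : Type*} [Nonempty ι] [Nonempty M] (f : M → ℝ) (g : ι → M)
    (h : ∀ ρ, ⨅ i, f (g i) ≤ f ρ) : ⨅ i, f (g i) = ⨅ ρ, f ρ :=
  le_antisymm (le_ciInf h) (le_ciInf fun i => ciInf_le ⟨_, forall_mem_range.mpr h⟩ (g i))

theorem add_mul_div_neg {K : Type*} [Field K] (x y q z : K) :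
    (x + q * y) / -z = -(x / z) + q * (-y / z) := by
  ring

theorem alpha_one_eq_inf_general {M : Type*} [Nonempty M]
    (h G L : M → ℝ) (D : ℝ)
    (hD : ∀ ρ : M, 0 ≤ h ρ / L ρ ∧ h ρ / L ρ ≤ D)
    (νq : ℝ → M) (α T : ℝ → ℝ)
    (hα : ∀ q : ℝ, α q = -G (νq q) / L (νq q))
    (α₁ : ℝ) (hα₁ : α₁ = ⨅ q : ℝ, α q)
    (hT : ∀ q : ℝ, IsGLB (Set.range fun ρ : M => (h ρ + q * G ρ) / (-(L ρ))) (-(T q)))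
    (hTbound : ∀ q : ℝ, 0 ≤ q → -D + q * α₁ ≤ -(T q)) :
    α₁ = ⨅ ρ : M, -G ρ / L ρ := by
  have hle : ∀ ρ : M, α₁ ≤ -G ρ / L ρ := fun ρ =>
    le_of_forall_nonneg_mul_le_add (D := D) fun q hq => by
      have hlegendre := (hT q).1 (mem_range_self ρ)
      rw [add_mul_div_neg] at hlegendre
      linarith [hTbound q hq, (hD ρ).1]
  rw [funext hα] at hα₁
  subst hα₁
  exact ciInf_comp_eq_of_forall_le (fun ρ => -G ρ / L ρ) νq hle

/-- Boundary value of the spectrum: with `L ≥ L₀ > 0`, `G` and `h` bounded,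
`0 ≤ h ρ / L ρ ≤ D`, `α₁ = inf_q α q` where `α q = -G (ν_q) / L (ν_q)`, and the
Legendre relation `-T q = inf_ρ (h ρ + q G ρ) / (-(L ρ))` with
`-T q = -(h (ν_q) / L (ν_q)) + q * α q ≥ -D + q * α₁` for `q ≥ 0`, one has
`α₁ = inf_ρ (-G ρ / L ρ)`. -/
theorem alpha_one_eq_inf {M : Type*} [Nonempty M]
    (h G L : M → ℝ) (L₀ D Cg Ch : ℝ)
    (hL₀ : 0 < L₀) (hL : ∀ ρ : M, L₀ ≤ L ρ)
    (hG : ∀ ρ : M, |G ρ| ≤ Cg) (hh : ∀ ρ : M, |h ρ| ≤ Ch)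
    (hD : ∀ ρ : M, 0 ≤ h ρ / L ρ ∧ h ρ / L ρ ≤ D)
    (νq : ℝ → M) (α T : ℝ → ℝ)
    (hα : ∀ q : ℝ, α q = -G (νq q) / L (νq q))
    (α₁ : ℝ) (hα₁ : α₁ = ⨅ q : ℝ, α q)
    (hT : ∀ q : ℝ, IsGLB (Set.range fun ρ : M => (h ρ + q * G ρ) / (-(L ρ))) (-(T q)))
    (hTq : ∀ q : ℝ, -(T q) = -(h (νq q) / L (νq q)) + q * α q)
    (hTbound : ∀ q : ℝ, 0 ≤ q → -D + q * α₁ ≤ -(T q)) :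
    α₁ = ⨅ ρ : M, -G ρ / L ρ :=
  alpha_one_eq_inf_general h G L D hD νq α T hα α₁ hα₁ hT hTbound
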